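/- arXiv:2012.04868 — 4 statements merged into one kernel-verified Lean document; each statement's English description precedes it below -/
import Mathlib

section
/- Let A ∈ ℤ^{n×(n+1)} have rank n, with all entries of the i-th row of absolute value at most d_i. Then any generator b = (b_1,...,b_{n+1}) ∈ ℤ^{n+1} of the right nullspace of A with gcd(b_1,...,b_{n+1}) = 1 satisfies |b_j| ≤ n^{n/2} · Π_{i=1}^n d_i for all j. -/
/-!
The signed maximal minors `c j = (-1)^j det(A with column j deleted)` form an integer vector in
the kernel of `A` (Laplace expansion of a matrix with a repeated row). Since `A` has rank `n`
the rational kernel is the line spanned by `b`, and `c ≠ 0` because the minor at any `j` with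
`b j ≠ 0` is nonsingular. As `b` is primitive, `c = k • b` for some nonzero integer `k`, so
`|b j| ≤ |c j|`, and Hadamard's inequality bounds each minor by `∏ i, √n * d i`.
-/

open Matrix

namespace Matrix

section CrossVec

variable {R S : Type*} [CommRing R] [CommRing S] {n : ℕ}

/-- The generalised cross product of the rows of `A`: for `n = 2` it is `crossProduct`. -/
def crossVec (A : Matrix (Fin n) (Fin (n + 1)) R) : Fin (n + 1) → R :=
  fun j => (-1) ^ (j : ℕ) * (A.submatrix id j.succAbove).det

-- Row `i` of `A *ᵥ A.crossVec` is the Laplace expansion of `A` with `A i` prepended as a row.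
theorem mulVec_crossVec (A : Matrix (Fin n) (Fin (n + 1)) R) : A *ᵥ A.crossVec = 0 := by
  funext i
  have hrep : (of (Fin.cons (A i) A) : Matrix (Fin (n + 1)) (Fin (n + 1)) R).det = 0 :=
    det_zero_of_row_eq (Fin.succ_ne_zero i).symm rfl
  rw [det_succ_row_zero] at hrep
  rw [Pi.zero_apply, ← hrep, mulVec, dotProduct]
  refine Finset.sum_congr rfl fun j _ => ?_
  change A i j * ((-1) ^ (j : ℕ) * (A.submatrix id j.succAbove).det) =
    (-1) ^ (j : ℕ) * A i j * (A.submatrix id j.succAbove).det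
  ring

theorem crossVec_map (f : R →+* S) (A : Matrix (Fin n) (Fin (n + 1)) R) :
    (A.map f).crossVec = f ∘ A.crossVec := by
  funext j
  simp [crossVec, ← submatrix_map, RingHom.map_det]

theorem crossVec_apply_eq_zero_iff {A : Matrix (Fin n) (Fin (n + 1)) R} {j : Fin (n + 1)} :
    A.crossVec j = 0 ↔ (A.submatrix id j.succAbove).det = 0 :=
  (isUnit_neg_one.pow _).mul_right_eq_zero

theorem abs_crossVec_apply {R : Type*} [CommRing R] [LinearOrder R] [IsStrictOrderedRing R]
    (A : Matrix (Fin n) (Fin (n + 1)) R) (j : Fin (n + 1)) :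
    |A.crossVec j| = |(A.submatrix id j.succAbove).det| := by
  simp [crossVec, abs_mul]

end CrossVec

theorem mulVec_insertNth_zero {R m : Type*} [NonUnitalNonAssocSemiring R] {n : ℕ}
    (A : Matrix m (Fin (n + 1)) R) (j : Fin (n + 1)) (v : Fin n → R) :
    A *ᵥ j.insertNth 0 v = A.submatrix id j.succAbove *ᵥ v := by
  funext i
  simp [mulVec, dotProduct, Fin.sum_univ_succAbove _ j]

section Field

variable {K : Type*} [Field K]

theorem ker_mulVecLin_eq_span_singleton {m ι : Type*} [Fintype ι] (A : Matrix m ι K)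
    (hrank : A.rank + 1 = Fintype.card ι) {b : ι → K} (hb : b ≠ 0) (hAb : A *ᵥ b = 0) :
    LinearMap.ker A.mulVecLin = K ∙ b := by
  have hdim : Module.finrank K (LinearMap.ker A.mulVecLin) = 1 := by
    have := LinearMap.finrank_range_add_finrank_ker A.mulVecLin
    rw [Module.finrank_fintype_fun_eq_card] at this
    unfold rank at hrank
    omega
  refine (Submodule.eq_of_le_of_finrank_le ?_ ?_).symm
  · rwa [Submodule.span_singleton_le_iff_mem, LinearMap.mem_ker]
  · rw [hdim, finrank_span_singleton hb]

-- A kernel vector of the minor, padded with `0` at `j`, would be a multiple of `b` vanishing at `j`.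
theorem det_submatrix_succAbove_ne_zero {n : ℕ} {A : Matrix (Fin n) (Fin (n + 1)) K}
    {b : Fin (n + 1) → K} (hker : LinearMap.ker A.mulVecLin = K ∙ b) {j : Fin (n + 1)}
    (hj : b j ≠ 0) : (A.submatrix id j.succAbove).det ≠ 0 := by
  intro hdet
  obtain ⟨v, hv, hAv⟩ := exists_mulVec_eq_zero_iff.mpr hdet
  have hmem : j.insertNth 0 v ∈ K ∙ b := by
    rw [← hker, LinearMap.mem_ker, mulVecLin_apply, mulVec_insertNth_zero, hAv]
  obtain ⟨r, hr⟩ := Submodule.mem_span_singleton.mp hmem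
  have hr0 : r = 0 := by
    have := congrFun hr j
    simp only [Pi.smul_apply, smul_eq_mul, Fin.insertNth_apply_same] at this
    exact (mul_eq_zero.mp this).resolve_right hj
  apply hv
  funext k
  simpa [hr0] using (congrFun hr (j.succAbove k)).symm

end Field

theorem abs_det_le_prod_norm_rows {m : ℕ} (M : Matrix (Fin m) (Fin m) ℝ) :
    |M.det| ≤ ∏ i, ‖WithLp.toLp 2 (M i)‖ := by
  set v : Fin m → EuclideanSpace ℝ (Fin m) := fun i => WithLp.toLp 2 (M i)
  have hcard : Module.finrank ℝ (EuclideanSpace ℝ (Fin m)) = Fintype.card (Fin m) := by simp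
  set e := EuclideanSpace.basisFun (Fin m) ℝ
  set b := InnerProductSpace.gramSchmidtOrthonormalBasis hcard v
  have hM : M.det = e.toBasis.det v := by
    rw [Module.Basis.det_apply, ← det_transpose]; rfl
  have hchange : e.toBasis.det v = e.toBasis.det b * b.toBasis.det v :=
    DFunLike.congr_fun (e.toBasis.det.eq_smul_basis_det b.toBasis) v
  have hunit : |e.toBasis.det b| = 1 := by
    rcases e.det_to_matrix_orthonormalBasis_real b with h | h <;> simp [h]
  -- In the Gram–Schmidt basis of the rows the coordinate matrix is triangular.
  rw [hM, hchange, abs_mul, hunit, one_mul, InnerProductSpace.gramSchmidtOrthonormalBasis_det,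
    Finset.abs_prod]
  gcongr with i
  calc |inner ℝ (b i) (v i)| ≤ ‖b i‖ * ‖v i‖ := abs_real_inner_le_norm _ _
    _ = ‖v i‖ := by rw [b.orthonormal.1 i, one_mul]

end Matrix

theorem EuclideanSpace.norm_toLp_le_sqrt_card_mul {ι : Type*} [Fintype ι] {x : ι → ℝ} {c : ℝ}
    (hx : ∀ i, |x i| ≤ c) : ‖WithLp.toLp 2 x‖ ≤ √(Fintype.card ι) * c := by
  cases isEmpty_or_nonempty ι
  · simp [Subsingleton.elim x 0]
  have hc : 0 ≤ c := (abs_nonneg _).trans (hx (Classical.arbitrary ι))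
  calc ‖WithLp.toLp 2 x‖ = √(∑ i, x i ^ 2) := by simp [EuclideanSpace.norm_eq]
    _ ≤ √(∑ _i : ι, c ^ 2) := Real.sqrt_le_sqrt <| Finset.sum_le_sum fun i _ =>
      sq_le_sq' (abs_le.mp (hx i)).1 (abs_le.mp (hx i)).2
    _ = √(Fintype.card ι) * c := by
      rw [Finset.sum_const, Finset.card_univ, nsmul_eq_mul, Real.sqrt_mul (Nat.cast_nonneg _),
        Real.sqrt_sq hc]

theorem Matrix.abs_det_le_of_abs_le {m : ℕ} (M : Matrix (Fin m) (Fin m) ℝ) {d : Fin m → ℝ}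
    (hd : ∀ i j, |M i j| ≤ d i) : |M.det| ≤ (m : ℝ) ^ ((m : ℝ) / 2) * ∏ i, d i :=
  calc |M.det| ≤ ∏ i, ‖WithLp.toLp 2 (M i)‖ := abs_det_le_prod_norm_rows M
    _ ≤ ∏ i, √m * d i := by
      gcongr with i
      simpa using EuclideanSpace.norm_toLp_le_sqrt_card_mul (hd i)
    _ = (m : ℝ) ^ ((m : ℝ) / 2) * ∏ i, d i := by
      rw [Finset.prod_mul_distrib, Finset.prod_const, Finset.card_fin, Real.sqrt_eq_rpow,
        ← Real.rpow_mul_natCast (Nat.cast_nonneg m)]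
      ring_nf

theorem Int.exists_eq_smul_of_gcd_eq_one {ι : Type*} [Fintype ι] {b c : ι → ℤ}
    (hgcd : Finset.univ.gcd b = 1) {q : ℚ} (hq : ∀ j, (c j : ℚ) = q * b j) :
    ∃ k : ℤ, c = k • b := by
  have hden_dvd : ∀ j, (q.den : ℤ) ∣ b j := by
    intro j
    have hcross : q.num * b j = q.den * c j := by
      have hnum : (q.num : ℚ) = q * q.den := (Rat.mul_den_eq_num q).symm
      have : ((q.num * b j : ℤ) : ℚ) = ((q.den * c j : ℤ) : ℚ) := by
        push_cast
        rw [hnum, hq j]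
        ring
      exact_mod_cast this
    have hcop : IsCoprime (q.den : ℤ) q.num := by
      rw [Int.isCoprime_iff_gcd_eq_one]
      exact Nat.Coprime.symm q.reduced
    exact hcop.dvd_of_dvd_mul_left ⟨c j, hcross⟩
  have hden : q.den = 1 := by
    have := Finset.dvd_gcd (s := .univ) fun j _ => hden_dvd j
    rw [hgcd] at this
    exact_mod_cast Int.eq_one_of_dvd_one (Nat.cast_nonneg _) this
  refine ⟨q.num, funext fun j => ?_⟩
  have hcj := hq j
  rw [← Rat.num_div_den q, hden, Nat.cast_one, div_one] at hcj
  rw [Pi.smul_apply, smul_eq_mul]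
  exact_mod_cast hcj

theorem stmt4 {n : ℕ} (A : Matrix (Fin n) (Fin (n + 1)) ℤ)
    (hrank : (A.map (Int.cast : ℤ → ℚ)).rank = n)
    (d : Fin n → ℝ) (hd : ∀ i j, (|A i j| : ℝ) ≤ d i)
    (b : Fin (n + 1) → ℤ) (hb : b ≠ 0) (hker : A.mulVec b = 0)
    (hgcd : Finset.univ.gcd b = 1) :
    ∀ j, (|b j| : ℝ) ≤ (n : ℝ) ^ ((n : ℝ) / 2) * ∏ i, d i := by
  intro j
  set Aℚ := A.map (Int.cast : ℤ → ℚ)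
  have hcast (v : Fin (n + 1) → ℤ) : Aℚ *ᵥ (Int.cast ∘ v) = Int.cast ∘ (A *ᵥ v) :=
    funext fun i => ((Int.castRingHom ℚ).map_mulVec A v i).symm
  have hkerℚ : LinearMap.ker Aℚ.mulVecLin = ℚ ∙ (Int.cast ∘ b) := by
    refine ker_mulVecLin_eq_span_singleton _ (by simp [Aℚ, hrank]) ?_ (by rw [hcast, hker]; simp)
    exact fun h => hb (funext fun k => by simpa using congrFun h k)
  obtain ⟨j₀, hj₀⟩ : ∃ j₀, b j₀ ≠ 0 := Function.ne_iff.mp hb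
  have hcross : A.crossVec ≠ 0 := fun h =>
    det_submatrix_succAbove_ne_zero hkerℚ (j := j₀) (by simpa using hj₀) <|
      crossVec_apply_eq_zero_iff.mp <|
        (congrFun (crossVec_map (Int.castRingHom ℚ) A) j₀).trans (by simp [h])
  have hmem : Int.cast ∘ A.crossVec ∈ LinearMap.ker Aℚ.mulVecLin := by
    rw [LinearMap.mem_ker, mulVecLin_apply, hcast, mulVec_crossVec]; simp
  obtain ⟨q, hq⟩ := Submodule.mem_span_singleton.mp (hkerℚ ▸ hmem)
  obtain ⟨k, hk⟩ := Int.exists_eq_smul_of_gcd_eq_one hgcd (c := A.crossVec) (q := q)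
    fun j => by simpa using (congrFun hq j).symm
  have hk0 : k ≠ 0 := fun hk0 => hcross (by simp [hk, hk0])
  calc (|b j| : ℝ) ≤ |A.crossVec j| := by
        rw [hk, Pi.smul_apply, smul_eq_mul, abs_mul]
        exact_mod_cast le_mul_of_one_le_left (abs_nonneg _) (Int.one_le_abs hk0)
    _ = |((A.map (Int.castRingHom ℝ)).submatrix id j.succAbove).det| := by
        rw [← abs_crossVec_apply, crossVec_map]; simp
    _ ≤ (n : ℝ) ^ ((n : ℝ) / 2) * ∏ i, d i :=
        abs_det_le_of_abs_le _ fun i k => by simpa using hd i _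
end

section
/- Let a_1,...,a_n ∈ ℤ^n be linearly independent, A the matrix with columns a_j, and r the rank over 𝔽_2 of the mod-2 reduction of A. Then the monomial map m : (ℝ*)^n → (ℝ*)^n defined by m(x) = x^A is 2^{n-r}-to-1 onto its image. -/
/-!
If `y ^ A = x ^ A` with all coordinates nonzero, then `t = |y| / |x|` is a positive solution of
`t ^ A = 1`; taking logarithms gives `log t ᵥ* A = 0`, so `t = 1` because `A` is invertible
over `ℚ`. Hence `y = (-1) ^ ε * x` for a sign vector `ε ∈ 𝔽₂ⁿ`, and
`((-1) ^ ε * x) ^ A = (-1) ^ (Aᵀ ε) * x ^ A` with `Aᵀ ε` computed mod 2. So the fiber is in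
bijection with the kernel of `Aᵀ` over `𝔽₂`, which has `2 ^ (n - r)` elements.
-/

open Matrix

noncomputable def signChar : AddChar (ZMod 2) ℝ :=
  AddChar.zmodChar 2 (by norm_num : (-1 : ℝ) ^ 2 = 1)

lemma signChar_one : signChar 1 = -1 := by
  rw [signChar, AddChar.zmodChar_apply, ZMod.val_one, pow_one]

lemma ZMod.eq_zero_or_eq_one_of_two (e : ZMod 2) : e = 0 ∨ e = 1 := by
  revert e; decide

lemma signChar_injective : Function.Injective signChar := by
  intro a b h
  rcases ZMod.eq_zero_or_eq_one_of_two a with rfl | rfl <;>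
    rcases ZMod.eq_zero_or_eq_one_of_two b with rfl | rfl <;>
    first | rfl | norm_num [signChar_one] at h

lemma signChar_ne_zero (e : ZMod 2) : signChar e ≠ 0 := by
  rcases ZMod.eq_zero_or_eq_one_of_two e with rfl | rfl <;> norm_num [signChar_one]

lemma signChar_sum {ι : Type*} (s : Finset ι) (f : ι → ZMod 2) :
    signChar (∑ i ∈ s, f i) = ∏ i ∈ s, signChar (f i) :=
  map_prod signChar.toMonoidHom (fun i => Multiplicative.ofAdd (f i)) s

lemma signChar_zpow (e : ZMod 2) (z : ℤ) : signChar e ^ z = signChar (z * e) := by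
  rw [← AddChar.map_zsmul_eq_zpow, zsmul_eq_mul]

lemma signChar_mul_injective {ι : Type*} {x : ι → ℝ} (hx : ∀ i, x i ≠ 0) :
    Function.Injective fun (ε : ι → ZMod 2) i => signChar (ε i) * x i :=
  fun _ _ h => funext fun i => signChar_injective (mul_right_cancel₀ (hx i) (congrFun h i))

lemma exists_signChar_mul_eq_of_abs_eq {a b : ℝ} (h : |b| = |a|) : ∃ e, signChar e * a = b := by
  rcases abs_eq_abs.mp h with rfl | rfl
  · exact ⟨0, by simp⟩
  · exact ⟨1, by simp [signChar_one]⟩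

lemma Matrix.card_ker_mulVecLin {K m n : Type*} [Field K] [Fintype K] [Fintype m] [Fintype n]
    (B : Matrix m n K) :
    Nat.card (LinearMap.ker B.mulVecLin) = Fintype.card K ^ (Fintype.card n - B.rank) := by
  have := LinearMap.finrank_range_add_finrank_ker B.mulVecLin
  rw [Module.finrank_fintype_fun_eq_card, ← Matrix.rank] at this
  rw [Module.natCard_eq_pow_finrank (K := K), Nat.card_eq_fintype_card]
  congr 1
  omega

lemma Matrix.det_ne_zero_of_linearIndependent_intCast_cols {ι : Type*} [Fintype ι] [DecidableEq ι]
    {A : Matrix ι ι ℤ} (h : LinearIndependent ℚ fun j i => (A i j : ℚ)) : A.det ≠ 0 := by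
  have hunit : IsUnit (A.map (Int.cast : ℤ → ℚ)) :=
    Matrix.linearIndependent_cols_iff_isUnit.mp h
  rw [Matrix.isUnit_iff_isUnit_det, ← Int.cast_det, isUnit_iff_ne_zero] at hunit
  exact_mod_cast hunit

section MonomialMap

variable {ι κ : Type*} [Fintype ι]

noncomputable def monomialMap (A : Matrix ι κ ℤ) (x : ι → ℝ) : κ → ℝ := fun k => ∏ i, x i ^ A i k

lemma monomialMap_ne_zero (A : Matrix ι κ ℤ) {x : ι → ℝ} (hx : ∀ i, x i ≠ 0) (k : κ) :
    monomialMap A x k ≠ 0 :=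
  Finset.prod_ne_zero_iff.mpr fun i _ => zpow_ne_zero _ (hx i)

lemma monomialMap_signChar_mul (A : Matrix ι κ ℤ) (ε : ι → ZMod 2) (x : ι → ℝ) (k : κ) :
    monomialMap A (fun i => signChar (ε i) * x i) k =
      signChar (((A.map (Int.cast : ℤ → ZMod 2))ᵀ *ᵥ ε) k) * monomialMap A x k := by
  simp only [monomialMap, mulVec, dotProduct, transpose_apply, map_apply, signChar_sum,
    ← Finset.prod_mul_distrib, mul_zpow, signChar_zpow]

lemma eq_one_of_monomialMap_eq_one [DecidableEq ι] {A : Matrix ι ι ℤ} (hA : A.det ≠ 0)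
    {t : ι → ℝ} (ht : ∀ i, 0 < t i) (h : monomialMap A t = 1) : t = 1 := by
  have hunit : IsUnit (A.map (Int.cast : ℤ → ℝ)) := by
    rw [Matrix.isUnit_iff_isUnit_det, ← Int.cast_det, isUnit_iff_ne_zero]
    exact_mod_cast hA
  have hlog : (fun i => Real.log (t i)) ᵥ* A.map Int.cast = 0 ᵥ* A.map Int.cast := by
    funext k
    have := congrArg Real.log (congrFun h k)
    rw [monomialMap, Real.log_prod fun i _ => zpow_ne_zero _ (ht i).ne'] at this
    simpa [vecMul, dotProduct, Real.log_zpow, mul_comm] using this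
  funext i
  exact Real.eq_one_of_pos_of_log_eq_zero (ht i)
    (congrFun (vecMul_injective_iff_isUnit.mpr hunit hlog) i)

lemma abs_eq_abs_of_monomialMap_eq [DecidableEq ι] {A : Matrix ι ι ℤ} (hA : A.det ≠ 0)
    {x y : ι → ℝ} (hx : ∀ i, x i ≠ 0) (hy : ∀ i, y i ≠ 0)
    (h : monomialMap A y = monomialMap A x) (i : ι) : |y i| = |x i| := by
  have hpos : ∀ i, 0 < |y i| / |x i| := fun i =>
    div_pos (abs_pos.mpr (hy i)) (abs_pos.mpr (hx i))
  have hquot : monomialMap A (fun i => |y i| / |x i|) = 1 := by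
    funext k
    simp only [monomialMap, div_zpow, ← abs_zpow, Finset.prod_div_distrib, ← Finset.abs_prod,
      Pi.one_apply]
    rw [show ∏ i, y i ^ A i k = monomialMap A y k from rfl, h]
    exact div_self (abs_ne_zero.mpr (monomialMap_ne_zero A hx k))
  exact (div_eq_one_iff_eq (abs_ne_zero.mpr (hx i))).mp
    (congrFun (eq_one_of_monomialMap_eq_one hA hpos hquot) i)

lemma setOf_monomialMap_eq [DecidableEq ι] {A : Matrix ι ι ℤ} (hA : A.det ≠ 0) {x : ι → ℝ}
    (hx : ∀ i, x i ≠ 0) :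
    {y | (∀ i, y i ≠ 0) ∧ monomialMap A y = monomialMap A x} =
      (fun (ε : ι → ZMod 2) i => signChar (ε i) * x i) ''
        LinearMap.ker (A.map (Int.cast : ℤ → ZMod 2))ᵀ.mulVecLin := by
  ext y
  constructor
  · rintro ⟨hy, h⟩
    choose ε hε using fun i =>
      exists_signChar_mul_eq_of_abs_eq (abs_eq_abs_of_monomialMap_eq hA hx hy h i)
    refine ⟨ε, funext fun k => signChar_injective ?_, funext hε⟩
    have hk := congrFun h k
    rw [← funext hε, monomialMap_signChar_mul] at hk
    rw [Pi.zero_apply, AddChar.map_zero_eq_one]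
    exact mul_right_cancel₀ (monomialMap_ne_zero A hx k) (hk.trans (one_mul _).symm)
  · rintro ⟨ε, hε, rfl⟩
    refine ⟨fun i => mul_ne_zero (signChar_ne_zero _) (hx i), funext fun k => ?_⟩
    rw [monomialMap_signChar_mul, show _ *ᵥ ε = 0 from hε, Pi.zero_apply,
      AddChar.map_zero_eq_one, one_mul]

end MonomialMap

theorem stmt7 {n : ℕ} (A : Matrix (Fin n) (Fin n) ℤ)
    (hindep : LinearIndependent ℚ fun j => fun i => (A i j : ℚ))
    (r : ℕ) (hr : (A.map (Int.cast : ℤ → ZMod 2)).rank = r)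
    (x : Fin n → ℝ) (hx : ∀ i, x i ≠ 0) :
    {x' : Fin n → ℝ | (∀ i, x' i ≠ 0) ∧
        ∀ k, (∏ i, x' i ^ A i k) = ∏ i, x i ^ A i k}.ncard = 2 ^ (n - r) := by
  have hA := det_ne_zero_of_linearIndependent_intCast_cols hindep
  change {y | (∀ i, y i ≠ 0) ∧ ∀ k, monomialMap A y k = monomialMap A x k}.ncard = _
  simp only [← funext_iff]
  rw [setOf_monomialMap_eq hA hx, Set.ncard_image_of_injective _ (signChar_mul_injective hx),
    ← Nat.card_coe_set_eq, SetLike.coe_sort_coe, card_ker_mulVecLin, rank_transpose, hr,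
    ZMod.card, Fintype.card_fin]
end

section
/- If β is an algebraic number with minimal polynomial m ∈ ℤ[x] (with coprime integer coefficients) of degree d, then h(β) ≤ (log |m|_2)/d, where |m|_2 is the Euclidean norm of the coefficient vector of m. -/
/-- The absolute logarithmic Weil height of an algebraic number, expressed via
its (primitive, irreducible) integer minimal polynomial `m`. -/
noncomputable def algLogHeight (m : Polynomial ℤ) : ℝ :=
  (1 / (m.natDegree : ℝ)) *
    (Real.log |(m.leadingCoeff : ℝ)| +
      (((m.map (Int.castRingHom ℂ)).roots).map fun z => Real.log (max ‖z‖ 1)).sum)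

open Polynomial Real

/-! The height is `log M(m) / d`, where `M(m) = |c_d| ∏ max(1, |β_i|)` is the Mahler measure of
`m`, so the claim is Landau's inequality `M(m) ≤ |m|₂`, which Mathlib proves via Jensen's formula
and Parseval's identity. -/

lemma Polynomial.sum_support_sq_norm_coeff_map_intCast (m : ℤ[X]) :
    ∑ i ∈ (m.map (Int.castRingHom ℂ)).support, ‖(m.map (Int.castRingHom ℂ)).coeff i‖ ^ 2 =
      ∑ i ∈ Finset.range (m.natDegree + 1), (m.coeff i : ℝ) ^ 2 := by
  refine (sum_over_range (f := fun _ (a : ℂ) => ‖a‖ ^ 2) _ fun _ => by simp).trans ?_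
  rw [natDegree_map_eq_of_injective (RingHom.injective_int _)]
  simp [sq_abs]

lemma Polynomial.logMahlerMeasure_map_intCast_le (m : ℤ[X]) (hm : m ≠ 0) :
    (m.map (Int.castRingHom ℂ)).logMahlerMeasure ≤
      log √(∑ i ∈ Finset.range (m.natDegree + 1), (m.coeff i : ℝ) ^ 2) := by
  rw [logMahlerMeasure_eq_log_MahlerMeasure, ← sum_support_sq_norm_coeff_map_intCast]
  exact log_le_log (mahlerMeasure_pos_of_ne_zero ((Polynomial.map_ne_zero_iff
    (RingHom.injective_int _)).mpr hm)) (mahlerMeasure_le_sqrt_sum_sq_norm_coeff _)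

lemma algLogHeight_eq_logMahlerMeasure_div (m : ℤ[X]) :
    algLogHeight m = (m.map (Int.castRingHom ℂ)).logMahlerMeasure / m.natDegree := by
  rw [logMahlerMeasure_eq_log_leadingCoeff_add_sum_log_roots, algLogHeight, one_div_mul_eq_div,
    leadingCoeff_map_of_injective (RingHom.injective_int _)]
  simp [posLog_eq_log_max_one, max_comm]

theorem stmt10_general (m : Polynomial ℤ) :
    algLogHeight m ≤
      Real.log (Real.sqrt (∑ i ∈ Finset.range (m.natDegree + 1), ((m.coeff i : ℝ)) ^ 2)) /
        (m.natDegree : ℝ) := by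
  rcases eq_or_ne m 0 with rfl | hm
  · simp [algLogHeight]
  rw [algLogHeight_eq_logMahlerMeasure_div]
  exact div_le_div_of_nonneg_right (logMahlerMeasure_map_intCast_le m hm) m.natDegree.cast_nonneg

theorem stmt10 (m : Polynomial ℤ) (hirr : Irreducible m)
    (β : ℂ) (hroot : Polynomial.aeval β m = 0) :
    algLogHeight m ≤
      Real.log (Real.sqrt (∑ i ∈ Finset.range (m.natDegree + 1), ((m.coeff i : ℝ)) ^ 2)) /
        (m.natDegree : ℝ) :=
  stmt10_general m
end

section
/- Let f, g ∈ ℂ[x] with leading coefficients c and γ respectively, and suppose g divides f. Then |g|_1 ≤ 2^{deg g} · |γ/c| · |f|_2, where |·|_1 is the sum of absolute values of coefficients and |·|_2 is the Euclidean norm of the coefficient vector. -/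
/-!
Work with the Mahler measure `M`. Each coefficient of `g` is bounded by `binom(deg g, i) · M(g)`,
so `|g|₁ ≤ 2^(deg g) · M(g)`. Writing `f = g h`, multiplicativity gives `M(f) = M(g) M(h)`, and
`M(h) ≥ |lc h| = |c / γ|`, hence `M(g) ≤ |γ / c| · M(f)`. Finally Landau's inequality
`M(f) ≤ |f|₂` closes the chain.
-/

open Polynomial Finset

namespace Polynomial

theorem sum_norm_coeff_le_two_pow_natDegree_mul_mahlerMeasure (p : ℂ[X]) :
    ∑ i ∈ range (p.natDegree + 1), ‖p.coeff i‖ ≤ 2 ^ p.natDegree * p.mahlerMeasure := by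
  calc ∑ i ∈ range (p.natDegree + 1), ‖p.coeff i‖
      ≤ ∑ i ∈ range (p.natDegree + 1), (p.natDegree.choose i : ℝ) * p.mahlerMeasure :=
        sum_le_sum fun i _ ↦ norm_coeff_le_choose_mul_mahlerMeasure i p
    _ = 2 ^ p.natDegree * p.mahlerMeasure := by
        rw [← sum_mul, ← Nat.cast_sum, Nat.sum_range_choose]; push_cast; rfl

theorem mahlerMeasure_le_norm_div_mul_mahlerMeasure_of_dvd {f g : ℂ[X]} (hf : f ≠ 0)
    (hdvd : g ∣ f) :
    g.mahlerMeasure ≤ ‖g.leadingCoeff / f.leadingCoeff‖ * f.mahlerMeasure := by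
  obtain ⟨h, rfl⟩ := hdvd
  obtain ⟨hg, hh⟩ := mul_ne_zero_iff.mp hf
  rw [mahlerMeasure_mul, leadingCoeff_mul, norm_div, norm_mul, ← mul_assoc, div_mul_eq_mul_div,
    mul_div_mul_left _ _ (by simpa using hg), div_mul_eq_mul_div,
    le_div_iff₀ (by simpa using hh)]
  exact mul_le_mul_of_nonneg_left (leadingCoeff_le_mahlerMeasure h) (mahlerMeasure_nonneg g)

theorem sum_support_sq_norm_coeff_eq_sum_range (p : ℂ[X]) :
    ∑ i ∈ p.support, ‖p.coeff i‖ ^ 2 = ∑ i ∈ range (p.natDegree + 1), ‖p.coeff i‖ ^ 2 :=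
  sum_subset supp_subset_range_natDegree_succ fun i _ hi ↦ by simp [notMem_support_iff.mp hi]

end Polynomial

theorem stmt11 (f g : Polynomial ℂ) (hf : f ≠ 0) (hdvd : g ∣ f) :
    (∑ i ∈ Finset.range (g.natDegree + 1), ‖g.coeff i‖) ≤
      2 ^ g.natDegree * ‖g.leadingCoeff / f.leadingCoeff‖ *
        Real.sqrt (∑ i ∈ Finset.range (f.natDegree + 1), ‖f.coeff i‖ ^ 2) := by
  calc ∑ i ∈ range (g.natDegree + 1), ‖g.coeff i‖
      ≤ 2 ^ g.natDegree * g.mahlerMeasure :=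
        sum_norm_coeff_le_two_pow_natDegree_mul_mahlerMeasure g
    _ ≤ 2 ^ g.natDegree * (‖g.leadingCoeff / f.leadingCoeff‖ * f.mahlerMeasure) := by
        gcongr; exact mahlerMeasure_le_norm_div_mul_mahlerMeasure_of_dvd hf hdvd
    _ ≤ 2 ^ g.natDegree * ‖g.leadingCoeff / f.leadingCoeff‖ *
          √(∑ i ∈ range (f.natDegree + 1), ‖f.coeff i‖ ^ 2) := by
        rw [← mul_assoc, ← sum_support_sq_norm_coeff_eq_sum_range]
        gcongr
        exact mahlerMeasure_le_sqrt_sum_sq_norm_coeff f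
end
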